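/- In Game 1 on a set A ⊆ ω^ω, Player II has a winning strategy if and only if there exists a Laver tree L with [L] ⊆ A. -/
import Mathlib


/-- The restriction `x↾n` of `x : ℕ → ℕ` to its first `n` values, as a finite sequence. -/
def res (x : ℕ → ℕ) (n : ℕ) : List ℕ := List.ofFn fun i : Fin n => x i

/-- A subtree of `ω^{<ω}`: a set of finite sequences closed under initial segments. -/
def IsSubtree (T : Set (List ℕ)) : Prop := ∀ s ∈ T, ∀ t : List ℕ, t <+: s → t ∈ T

/-- `[T]`, the set of branches of a subtree `T`. -/
def branches (T : Set (List ℕ)) : Set (ℕ → ℕ) := {x | ∀ n, res x n ∈ T}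

/-- A Laver tree: a (nonempty) subtree in which every node splits infinitely often. -/
def IsLaver (T : Set (List ℕ)) : Prop :=
  IsSubtree T ∧ [] ∈ T ∧ ∀ s ∈ T, {n : ℕ | s ++ [n] ∈ T}.Infinite

/-- Game 1 on `A`: at round `k` Player I plays `n k` and Player II responds with `m k > n k`;
Player II wins iff `m ∈ A`.  A strategy for Player II maps a position, i.e. the list of
previous rounds `(n 0, m 0), …, (n (k-1), m (k-1))` together with Player I's move `n k`,
to Player II's move `m k`.  It is a *winning* strategy iff it is legal (its output always
exceeds Player I's last move) and every play following it lands in `A`. -/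
def IIWinsGame1 (A : Set (ℕ → ℕ)) : Prop :=
  ∃ σ : List (ℕ × ℕ) → ℕ → ℕ,
    (∀ p : List (ℕ × ℕ), ∀ n : ℕ, σ p n > n) ∧
    ∀ n m : ℕ → ℕ,
      (∀ k, m k = σ (List.ofFn fun i : Fin k => (n i, m i)) (n k)) → m ∈ A

lemma res_succ (x : ℕ → ℕ) (n : ℕ) : res x (n+1) = res x n ++ [x n] := by
  rw [res, List.ofFn_succ']; simp [res, List.concat_eq_append]

lemma res_length (x : ℕ → ℕ) (n : ℕ) : (res x n).length = n := by simp [res]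

lemma res_prefix (x : ℕ → ℕ) {m n : ℕ} (h : m ≤ n) : res x m <+: res x n := by
  induction h with
  | refl => exact List.prefix_refl _
  | step h ih => exact ih.trans (by rw [res_succ]; exact List.prefix_append _ _)

lemma res_congr {x y : ℕ → ℕ} {n : ℕ} (h : ∀ k < n, x k = y k) : res x n = res y n := by
  rw [res, res, List.ofFn_inj]; funext i; exact h i i.2

lemma eq_of_res_eq {x y : ℕ → ℕ} {n : ℕ} (h : res x n = res y n) : ∀ k < n, x k = y k := by
  rw [res, res, List.ofFn_inj] at h
  intro k hk; exact congrFun h ⟨k, hk⟩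

theorem game1_playerII_iff_laver (A : Set (ℕ → ℕ)) :
    IIWinsGame1 A ↔ ∃ L : Set (List ℕ), IsLaver L ∧ branches L ⊆ A := by
  constructor
  · rintro ⟨σ, hleg, hwin⟩
    classical
    set L : Set (List ℕ) := { s | ∃ x n : ℕ → ℕ, res x s.length = s ∧
        ∀ k < s.length, x k = σ (List.ofFn fun i : Fin k => (n i, x i)) (n k) } with hLdef
    have hsub : IsSubtree L := by
      rintro s ⟨x, n, hres, hcond⟩ t ht
      have hlen : t.length ≤ s.length := ht.length_le
      have ht' : res x t.length = t := by
        have h1 : res x t.length <+: s := hres ▸ res_prefix x hlen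
        exact (List.prefix_of_prefix_length_le h1 ht (by rw [res_length])).eq_of_length
          (by rw [res_length])
      exact ⟨x, n, ht', fun k hk => hcond k (lt_of_lt_of_le hk hlen)⟩
    refine ⟨L, ⟨hsub, ⟨fun _ => 0, fun _ => 0, rfl, by simp⟩, ?_⟩, ?_⟩
    · -- infinite splitting
      rintro s hs
      obtain ⟨x, n, hres, hcond⟩ := hs
      apply Set.infinite_of_not_bddAbove
      rintro ⟨N, hN⟩
      set pos := List.ofFn fun i : Fin s.length => (n i, x i) with hpos
      set m := σ pos N with hm
      have hmN : N < m := hleg pos N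
      set x' := Function.update x s.length m with hx'
      set n' := Function.update n s.length N with hn'
      have hx'lt : ∀ k < s.length, x' k = x k := fun k hk =>
        Function.update_of_ne (Nat.ne_of_lt hk) _ _
      have hn'lt : ∀ k < s.length, n' k = n k := fun k hk =>
        Function.update_of_ne (Nat.ne_of_lt hk) _ _
      have hmem : s ++ [m] ∈ L := by
        refine ⟨x', n', ?_, ?_⟩
        · have h1 : res x' s.length = s := by
            rw [res_congr hx'lt]; exact hres
          rw [List.length_append, List.length_singleton, res_succ, h1]
          simp [hx']
        · intro k hk
          rw [List.length_append, List.length_singleton] at hk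
          rcases Nat.lt_succ_iff_lt_or_eq.mp hk with hk | hk
          · have e1 : (List.ofFn fun i : Fin k => (n' i, x' i)) =
                List.ofFn fun i : Fin k => (n i, x i) := by
              rw [List.ofFn_inj]; funext i
              rw [hx'lt i (i.2.trans hk), hn'lt i (i.2.trans hk)]
            rw [hx'lt k hk, hn'lt k hk, e1]
            exact hcond k hk
          · subst hk
            have e1 : (List.ofFn fun i : Fin s.length => (n' i, x' i)) = pos := by
              rw [hpos, List.ofFn_inj]; funext i
              rw [hx'lt i i.2, hn'lt i i.2]
            rw [e1]
            simp [hx', hn', hm]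
      exact absurd (hN hmem) (not_le.mpr hmN)
    · -- branches ⊆ A
      intro x hx
      set W : ℕ → Set (ℕ → ℕ) := fun j =>
        {n | ∀ k < j, x k = σ (List.ofFn fun i : Fin k => (n i, x i)) (n k)} with hWdef
      have hWne : ∀ j, (W j).Nonempty := by
        intro j
        obtain ⟨y, n, hres, hcond⟩ := hx j
        rw [res_length] at hres hcond
        have hyx : ∀ k < j, y k = x k := eq_of_res_eq hres
        refine ⟨n, fun k hk => ?_⟩
        have e1 : (List.ofFn fun i : Fin k => (n i, x i)) =
            List.ofFn fun i : Fin k => (n i, y i) := by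
          rw [List.ofFn_inj]; funext i; rw [hyx i (i.2.trans hk)]
        rw [e1, ← hyx k hk]; exact hcond k hk
      choose N hNW using hWne
      have hbd : ∀ j, ∀ k < j, N j k < x k := by
        intro j k hk
        have := hNW j k hk
        calc N j k < σ (List.ofFn fun i : Fin k => (N j i, x i)) (N j k) := hleg _ _
          _ = x k := (hNW j k hk).symm
      set U := Filter.hyperfilter ℕ with hU
      have hIoi : ∀ k : ℕ, {j | k < j} ∈ U := by
        intro k
        apply Filter.hyperfilter_le_cofinite
        rw [Nat.cofinite_eq_atTop]
        exact Filter.Ioi_mem_atTop k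
      have hclaim : ∀ k : ℕ, ∃ v : ℕ, {j | k < j ∧ N j k = v} ∈ U := by
        intro k
        by_contra h
        push_neg at h
        have hcompl : ∀ v : ℕ, {j | k < j ∧ N j k = v}ᶜ ∈ U := fun v =>
          Ultrafilter.compl_mem_iff_notMem.mpr (h v)
        have hint : (⋂ v ∈ Set.Iic (x k), {j | k < j ∧ N j k = v}ᶜ) ∈ U :=
          (Filter.biInter_mem (Set.finite_Iic _)).mpr (fun v _ => hcompl v)
        obtain ⟨j, hj1, hj2⟩ := Filter.nonempty_of_mem (Filter.inter_mem (hIoi k) hint)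
        have hj3 : j ∈ {j | k < j ∧ N j k = N j k}ᶜ := by
          have := Set.mem_iInter₂.mp hj2 (N j k) (le_of_lt (hbd j k hj1))
          exact this
        exact hj3 ⟨hj1, rfl⟩
      choose v hv using hclaim
      apply hwin v x
      intro k
      have hint : ({j | k < j} ∩ ⋂ i ∈ Set.Iic k, {j | i < j ∧ N j i = v i}) ∈ U :=
        Filter.inter_mem (hIoi k) ((Filter.biInter_mem (Set.finite_Iic _)).mpr
          (fun i _ => hv i))
      obtain ⟨j, hj1, hj2⟩ := Filter.nonempty_of_mem hint
      have hagree : ∀ i ≤ k, N j i = v i := fun i hi =>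
        (Set.mem_iInter₂.mp hj2 i hi).2
      have h1 := hNW j k hj1
      have e1 : (List.ofFn fun i : Fin k => (N j i, x i)) =
          List.ofFn fun i : Fin k => (v i, x i) := by
        rw [List.ofFn_inj]; funext i; rw [hagree i (le_of_lt i.2)]
      rw [e1, hagree k le_rfl] at h1
      exact h1
  · rintro ⟨L, ⟨hsub, hroot, hsplit⟩, hLA⟩
    classical
    refine ⟨fun p n => if h : ∃ m, n < m ∧ (p.map Prod.snd) ++ [m] ∈ L then h.choose
      else n + 1, fun p n => ?_, fun n m hm => ?_⟩
    · dsimp only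
      split
      · next h => exact h.choose_spec.1
      · omega
    · have key : ∀ k, res m k ∈ L := by
        intro k
        induction k with
        | zero => exact hroot
        | succ k ih =>
          rw [res_succ]
          have hmap : (List.ofFn fun i : Fin k => (n i, m i)).map Prod.snd = res m k := by
            rw [List.map_ofFn]; rfl
          obtain ⟨m', hm'1, hm'2⟩ := (hsplit _ ih).exists_gt (n k)
          have hex : ∃ m'', n k < m'' ∧
              ((List.ofFn fun i : Fin k => (n i, m i)).map Prod.snd) ++ [m''] ∈ L := by
            rw [hmap]; exact ⟨m', hm'2, hm'1⟩
          have hmk : m k = hex.choose := by rw [hm k]; exact dif_pos hex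
          rw [hmk, ← hmap]
          exact hex.choose_spec.2
      exact hLA (fun j => key j)
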